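/- arXiv:1604.07533 — 2 statements merged into one kernel-verified Lean document; each statement's English description precedes it below -/
import Mathlib

section
/- Let U : 𝓢(ℝⁿ) → 𝓢(ℝⁿ) be a bijection satisfying, for all f, g ∈ 𝓢(ℝⁿ): (1) U(f + g*) = U(f) + (U(g))*, where h*(x) := conj(h(−x)); (2) U(f·g) = U(f)·U(g); (3) U(f ⋆ g) = U(f) ⋆ U(g). Then there exists a function m : ℂ → ℂ with m(0) = 0 such that for every nonzero α ∈ ℂ, every f ∈ 𝓢(ℝⁿ), and every x ∈ ℝⁿ, one has U(α f)(x) = m(α) · (U f)(x). -/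
set_option maxHeartbeats 1000000
open MeasureTheory SchwartzMap Real ContinuousLinearMap
open scoped FourierTransform RealInnerProductSpace Convolution ContDiff

variable {E : Type*} [NormedAddCommGroup E] [InnerProductSpace ℝ E] [FiniteDimensional ℝ E]
  [MeasurableSpace E] [BorelSpace E] [SecondCountableTopology E]

omit [FiniteDimensional ℝ E] [MeasurableSpace E] [BorelSpace E] [SecondCountableTopology E] in
lemma schwartz_temperate (f : 𝓢(E, ℂ)) : Function.HasTemperateGrowth (⇑f) :=
  ⟨f.smooth ⊤, fun n => ⟨0, SchwartzMap.seminorm ℝ 0 n f, fun x => by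
    simpa using norm_iteratedFDeriv_le_seminorm ℝ f n x⟩⟩

noncomputable def smul2 (f g : 𝓢(E, ℂ)) : 𝓢(E, ℂ) :=
  bilinLeftCLM (ContinuousLinearMap.mul ℝ ℂ) (schwartz_temperate g) f

omit [FiniteDimensional ℝ E] [MeasurableSpace E] [BorelSpace E] [SecondCountableTopology E] in
lemma smul2_apply (f g : 𝓢(E, ℂ)) (x : E) : smul2 f g x = f x * g x := rfl

lemma prod_integrable (f g : 𝓢(E, ℂ)) :
    Integrable (fun p : E × E => f (p.1 - p.2) * g p.2) ((volume : Measure E).prod volume) := by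
  have P0 := (g.integrable (μ := volume)).convolution_integrand (ContinuousLinearMap.mul ℝ ℂ)
    (f.integrable (μ := volume))
  simpa [mul_comm] using P0

lemma fourier_conv (f g : 𝓢(E, ℂ)) (ξ : E) :
    𝓕 (⇑f ⋆[ContinuousLinearMap.mul ℝ ℂ, volume] ⇑g) ξ = 𝓕 ⇑f ξ * 𝓕 ⇑g ξ := by
  have hQ : Integrable (fun p : E × E => (𝐞 (-⟪p.1, ξ⟫) : ℂ) * (f (p.1 - p.2) * g p.2))
      ((volume : Measure E).prod volume) := by
    refine (prod_integrable f g).norm.mono' ?_ ?_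
    · exact (((continuous_fourierChar.comp ((continuous_fst.inner continuous_const).neg)).subtype_val).mul
        ((f.continuous.comp (continuous_fst.sub continuous_snd)).mul
          (g.continuous.comp continuous_snd))).aestronglyMeasurable
    · filter_upwards with p
      rw [norm_mul]
      simp [Circle.norm_coe]
  calc 𝓕 (⇑f ⋆[ContinuousLinearMap.mul ℝ ℂ, volume] ⇑g) ξ
      = ∫ x, ∫ y, (𝐞 (-⟪x, ξ⟫) : ℂ) * (f (x - y) * g y) := by
        rw [Real.fourier_eq]
        congr 1; funext x
        rw [Circle.smul_def, smul_eq_mul, convolution_eq_swap, ← integral_const_mul]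
        simp only [ContinuousLinearMap.mul_apply']
    _ = ∫ y, ∫ x, (𝐞 (-⟪x, ξ⟫) : ℂ) * (f (x - y) * g y) := integral_integral_swap hQ
    _ = 𝓕 ⇑f ξ * 𝓕 ⇑g ξ := by
        rw [mul_comm]
        simp_rw [Real.fourier_eq, Circle.smul_def, smul_eq_mul]
        rw [← integral_mul_const]
        congr 1; funext y
        have step1 : ∫ x, (𝐞 (-⟪x, ξ⟫) : ℂ) * (f (x - y) * g y)
            = ∫ x, (𝐞 (-⟪x + y, ξ⟫) : ℂ) * (f x * g y) := by
          rw [← integral_add_right_eq_self (fun x => (𝐞 (-⟪x, ξ⟫) : ℂ) * (f (x - y) * g y)) y]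
          simp
        rw [step1]
        have key : ∀ x : E, (𝐞 (-⟪x + y, ξ⟫) : ℂ) = (𝐞 (-⟪x, ξ⟫) : ℂ) * (𝐞 (-⟪y, ξ⟫) : ℂ) := by
          intro x
          rw [inner_add_left, neg_add, AddChar.map_add_eq_mul]
          push_cast
          ring
        simp_rw [key]
        rw [← integral_const_mul]
        congr 1; funext x
        ring

noncomputable def conv2 (f g : 𝓢(E, ℂ)) : 𝓢(E, ℂ) :=
  (fourierTransformCLE ℂ 𝓢(E, ℂ)).symm
    (smul2 (fourierTransformCLE ℂ 𝓢(E, ℂ) f) (fourierTransformCLE ℂ 𝓢(E, ℂ) g))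

lemma conv2_apply (f g : 𝓢(E, ℂ)) (x : E) :
    conv2 f g x = ∫ y, f (x - y) * g y := by
  have hbg : BddAbove (Set.range fun x => ‖g x‖) := by
    refine ⟨SchwartzMap.seminorm ℝ 0 0 g, ?_⟩
    rintro - ⟨y, rfl⟩
    exact g.norm_le_seminorm ℝ y
  have hc : Continuous (⇑f ⋆[ContinuousLinearMap.mul ℝ ℂ, volume] ⇑g) :=
    hbg.continuous_convolution_right_of_integrable _ f.integrable g.continuous
  have hci : Integrable (⇑f ⋆[ContinuousLinearMap.mul ℝ ℂ, volume] ⇑g) :=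
    f.integrable.integrable_convolution _ g.integrable
  have hFc : 𝓕 (⇑f ⋆[ContinuousLinearMap.mul ℝ ℂ, volume] ⇑g)
      = ⇑(smul2 (fourierTransformCLE ℂ 𝓢(E, ℂ) f) (fourierTransformCLE ℂ 𝓢(E, ℂ) g)) := by
    funext ξ
    rw [fourier_conv]
    rfl
  have hFci : Integrable (𝓕 (⇑f ⋆[ContinuousLinearMap.mul ℝ ℂ, volume] ⇑g)) := by
    rw [hFc]
    exact (smul2 _ _).integrable
  have h1 : conv2 f g x = 𝓕⁻ (𝓕 (⇑f ⋆[ContinuousLinearMap.mul ℝ ℂ, volume] ⇑g)) x := by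
    rw [conv2]
    erw [FourierTransform.fourierCLE_symm_apply, SchwartzMap.fourierInv_coe]
    rw [hFc]
  rw [h1, hci.fourierInv_fourier_eq hFci hc.continuousAt, convolution_eq_swap]
  simp [ContinuousLinearMap.mul_apply']

/-- A smooth compactly supported function is a Schwartz map. -/
noncomputable def schwartzOfCompactSupport {f : E → ℂ} (hf : ContDiff ℝ ∞ f)
    (hsupp : HasCompactSupport f) : 𝓢(E, ℂ) where
  toFun := f
  smooth' := hf
  decay' := by
    intro k m
    have hcont : Continuous fun x => ‖x‖ ^ k * ‖iteratedFDeriv ℝ m f x‖ :=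
      (continuous_norm.pow k).mul ((hf.continuous_iteratedFDeriv (by exact_mod_cast le_top)).norm)
    have hcs : HasCompactSupport fun x => ‖x‖ ^ k * ‖iteratedFDeriv ℝ m f x‖ := by
      apply HasCompactSupport.mul_left
      exact (hsupp.iteratedFDeriv m).norm
    obtain ⟨C, hC⟩ := hcont.bounded_above_of_compact_support hcs
    exact ⟨C, fun x => (Real.le_norm_self _).trans (hC x)⟩

set_option linter.unusedSectionVars false in
@[simp] lemma schwartzOfCompactSupport_apply {f : E → ℂ} (hf : ContDiff ℝ ∞ f)
    (hsupp : HasCompactSupport f) (x : E) : schwartzOfCompactSupport hf hsupp x = f x := rfl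

section Main
variable {E : Type*} [NormedAddCommGroup E] [InnerProductSpace ℝ E] [FiniteDimensional ℝ E]
  [MeasurableSpace E] [BorelSpace E] [SecondCountableTopology E]

theorem main_scalar (U : 𝓢(E, ℂ) → 𝓢(E, ℂ)) (hbij : Function.Bijective U)
    (h2 : ∀ f g fg : 𝓢(E, ℂ), (∀ x, fg x = f x * g x) → ∀ x, U fg x = U f x * U g x)
    (h3 : ∀ f g fg : 𝓢(E, ℂ), (∀ x, fg x = ∫ y, f (x - y) * g y) → ∀ x, U fg x = ∫ y, U f (x - y) * U g y)
    (α : ℂ) : ∃ c : ℂ, ∀ f : 𝓢(E, ℂ), ∀ x, U (α • f) x = c * U f x := by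
  classical
  -- L1
  have key2 : ∀ (f g : 𝓢(E, ℂ)) (x : E), U (α • f) x * U g x = U f x * U (α • g) x := by
    intro f g x
    have e1 := h2 (α • f) g (α • smul2 f g)
      (fun t => by simp only [SchwartzMap.smul_apply, smul2_apply, smul_eq_mul]; ring) x
    have e2 := h2 f (α • g) (α • smul2 f g)
      (fun t => by simp only [SchwartzMap.smul_apply, smul2_apply, smul_eq_mul]; ring) x
    exact e1.symm.trans e2
  -- L2
  have exists_ne : ∀ x : E, ∃ g : 𝓢(E, ℂ), U g x ≠ 0 := by
    intro x
    set b : ContDiffBump x := ⟨1, 2, one_pos, one_lt_two⟩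
    have hcd : ContDiff ℝ ∞ (fun u => (b u : ℂ)) :=
      Complex.ofRealCLM.contDiff.comp b.contDiff
    have hcs : HasCompactSupport (fun u => (b u : ℂ)) :=
      b.hasCompactSupport.comp_left Complex.ofReal_zero
    obtain ⟨g, hg⟩ := hbij.2 (schwartzOfCompactSupport hcd hcs)
    refine ⟨g, ?_⟩
    rw [hg, schwartzOfCompactSupport_apply]
    have : b x = 1 := b.one_of_mem_closedBall (Metric.mem_closedBall_self (le_of_lt one_pos))
    simp [this]
  choose gg hgg using exists_ne
  set r : E → ℂ := fun x => U (α • gg x) x / U (gg x) x with hr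
  -- L3
  have L3 : ∀ (f : 𝓢(E, ℂ)) (x : E), U (α • f) x = r x * U f x := by
    intro f x
    rw [hr]
    rw [div_mul_eq_mul_div, eq_div_iff (hgg x)]
    linear_combination key2 f (gg x) x
  -- L4
  have Lcont : Continuous r := by
    rw [continuous_iff_continuousAt]
    intro x₀
    have hopen : ∀ᶠ y in nhds x₀, U (gg x₀) y ≠ 0 :=
      (U (gg x₀)).continuous.continuousAt.eventually_ne (hgg x₀)
    have heq : ∀ᶠ y in nhds x₀, r y = U (α • gg x₀) y / U (gg x₀) y := by
      filter_upwards [hopen] with y hy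
      rw [eq_div_iff hy]
      linear_combination (L3 (gg x₀) y).symm
    exact ContinuousAt.congr
      (((U (α • gg x₀)).continuous.continuousAt).div ((U (gg x₀)).continuous.continuousAt) (hgg x₀))
      (heq.mono fun y hy => hy.symm)
  -- L5
  have L5 : ∀ (f g : 𝓢(E, ℂ)) (x : E),
      (∫ y, U (α • f) (x - y) * U g y) = r x * ∫ y, U f (x - y) * U g y := by
    intro f g x
    have hc1 := h3 f g (conv2 f g) (conv2_apply f g) x
    have hconv : ∀ t, (α • conv2 f g) t = ∫ y, (α • f) (t - y) * g y := by
      intro t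
      rw [SchwartzMap.smul_apply, conv2_apply, smul_eq_mul, ← integral_const_mul]
      congr 1; funext y
      rw [SchwartzMap.smul_apply, smul_eq_mul]; ring
    have hc2 := h3 (α • f) g (α • conv2 f g) hconv x
    rw [← hc2, L3 (conv2 f g) x, hc1]
  -- L6 : r is constant
  have L6 : ∀ x z : E, r z = r x := by
    intro x z
    have hs : ∀ u : E, r u - r x = 0 := by
      have hloc : LocallyIntegrable (fun u => r u - r x) volume :=
        (Lcont.sub continuous_const).locallyIntegrable
      have key : ∀ (φ : E → ℝ), ContDiff ℝ ∞ φ → HasCompactSupport φ →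
          ∫ u, φ u • (r u - r x) = 0 := by
        intro φ hφ hφs
        have hcdA : ContDiff ℝ ∞ (fun u => (φ u : ℂ)) := Complex.ofRealCLM.contDiff.comp hφ
        have hcsA : HasCompactSupport (fun u => (φ u : ℂ)) := hφs.comp_left Complex.ofReal_zero
        set A := schwartzOfCompactSupport hcdA hcsA with hA
        have hK : IsCompact ((fun u : E => x - u) '' tsupport φ) :=
          hφs.isCompact.image (continuous_const.sub continuous_id)
        obtain ⟨R, hR⟩ := hK.isBounded.subset_closedBall 0
        set R' := max R 1 with hR'
        set b : ContDiffBump (0 : E) :=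
          ⟨R', R' + 1, lt_of_lt_of_le one_pos (le_max_right _ _), lt_add_one _⟩ with hb
        have hcdB : ContDiff ℝ ∞ (fun u => (b u : ℂ)) := Complex.ofRealCLM.contDiff.comp b.contDiff
        have hcsB : HasCompactSupport (fun u => (b u : ℂ)) :=
          b.hasCompactSupport.comp_left Complex.ofReal_zero
        set B := schwartzOfCompactSupport hcdB hcsB with hB
        have hBone : ∀ u : E, u ∈ tsupport φ → B (x - u) = 1 := by
          intro u hu
          rw [hB, schwartzOfCompactSupport_apply]
          have hmem : x - u ∈ Metric.closedBall (0 : E) R' :=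
            Metric.closedBall_subset_closedBall (le_max_left _ _) (hR ⟨u, hu, rfl⟩)
          rw [b.one_of_mem_closedBall hmem, Complex.ofReal_one]
        obtain ⟨fA, hfA⟩ := hbij.2 A
        obtain ⟨fB, hfB⟩ := hbij.2 B
        have hL5 := L5 fA fB x
        rw [hfA, hfB] at hL5
        have cv1 : (∫ y, U (α • fA) (x - y) * B y) = ∫ u, U (α • fA) u * B (x - u) := by
          rw [← integral_sub_left_eq_self (fun u => U (α • fA) u * B (x - u)) volume x]
          congr 1; funext y; simp
        have cv2 : (∫ y, A (x - y) * B y) = ∫ u, A u * B (x - u) := by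
          rw [← integral_sub_left_eq_self (fun u => A u * B (x - u)) volume x]
          congr 1; funext y; simp
        rw [cv1, cv2] at hL5
        have hBbd : ∀ u : E, ‖B (x - u)‖ ≤ 1 := by
          intro u
          rw [hB, schwartzOfCompactSupport_apply]
          simp only [Complex.norm_real, Real.norm_eq_abs]
          rw [abs_of_nonneg b.nonneg]
          exact b.le_one
        have hBmeas : AEStronglyMeasurable (fun u : E => B (x - u)) volume :=
          (B.continuous.comp (continuous_const.sub continuous_id)).aestronglyMeasurable
        have int1 : Integrable (fun u => U (α • fA) u * B (x - u)) volume := by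
          have := (U (α • fA)).integrable (μ := volume) |>.bdd_mul (c := 1) hBmeas (Filter.Eventually.of_forall fun u => hBbd u)
          simpa [mul_comm] using this
        have int2 : Integrable (fun u => A u * B (x - u)) volume := by
          have := A.integrable (μ := volume) |>.bdd_mul (c := 1) hBmeas (Filter.Eventually.of_forall fun u => hBbd u)
          simpa [mul_comm] using this
        have hptw : ∀ u : E, φ u • (r u - r x)
            = U (α • fA) u * B (x - u) - r x * (A u * B (x - u)) := by
          intro u
          have h1 : U (α • fA) u = r u * A u := by rw [L3 fA u, hfA]
          rw [h1]
          by_cases hu : φ u = 0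
          · have hAu : A u = 0 := by
              rw [hA, schwartzOfCompactSupport_apply, hu, Complex.ofReal_zero]
            simp [hu, hAu]
          · have hB1 : B (x - u) = 1 := hBone u (subset_tsupport φ hu)
            have hAu : A u = (φ u : ℂ) := by rw [hA, schwartzOfCompactSupport_apply]
            rw [hB1, hAu, Complex.real_smul]
            ring
        calc ∫ u, φ u • (r u - r x)
            = ∫ u, (U (α • fA) u * B (x - u) - r x * (A u * B (x - u))) := by
              congr 1; funext u; exact hptw u
          _ = (∫ u, U (α • fA) u * B (x - u)) - ∫ u, r x * (A u * B (x - u)) :=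
              integral_sub int1 (int2.const_mul (r x))
          _ = 0 := by rw [integral_const_mul, hL5, sub_self]
      have hae := ae_eq_zero_of_integral_contDiff_smul_eq_zero hloc key
      have heq : (fun u => r u - r x) = (fun _ => (0 : ℂ)) :=
        (Continuous.ae_eq_iff_eq volume (Lcont.sub continuous_const) continuous_const).1 hae
      intro u
      exact congrFun heq u
    exact sub_eq_zero.mp (hs z)
  exact ⟨r 0, fun f x => by rw [L3 f x, L6 x 0]⟩
end Main

open scoped ComplexConjugate

theorem stmt11 (n : ℕ)
    (U : SchwartzMap (EuclideanSpace ℝ (Fin n)) ℂ → SchwartzMap (EuclideanSpace ℝ (Fin n)) ℂ)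
    (hbij : Function.Bijective U)
    (h1 : ∀ f g fg : SchwartzMap (EuclideanSpace ℝ (Fin n)) ℂ,
      (∀ x, fg x = f x + conj (g (-x))) →
      ∀ x, U fg x = U f x + conj (U g (-x)))
    (h2 : ∀ f g fg : SchwartzMap (EuclideanSpace ℝ (Fin n)) ℂ,
      (∀ x, fg x = f x * g x) →
      ∀ x, U fg x = U f x * U g x)
    (h3 : ∀ f g fg : SchwartzMap (EuclideanSpace ℝ (Fin n)) ℂ,
      (∀ x, fg x = ∫ y, f (x - y) * g y) →
      ∀ x, U fg x = ∫ y, U f (x - y) * U g y) :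
    ∃ m : ℂ → ℂ, m 0 = 0 ∧
      ∀ α : ℂ, α ≠ 0 → ∀ f : SchwartzMap (EuclideanSpace ℝ (Fin n)) ℂ, ∀ x, U (α • f) x = m α * U f x := by
  classical
  have main := fun α : ℂ => main_scalar U hbij h2 h3 α
  choose M hM using main
  refine ⟨fun β => if β = 0 then 0 else M β, by simp, ?_⟩
  intro α hα f x
  simp only [if_neg hα]
  exact hM α f x
end

section
/- Let U : 𝓢(ℝⁿ) → 𝓢(ℝⁿ) be a bijection satisfying, for all f, g ∈ 𝓢(ℝⁿ): (1) U(f + g*) = U(f) + (U(g))*, where h*(x) := conj(h(−x)); (2) U(f·g) = U(f)·U(g); (3) U(f ⋆ g) = U(f) ⋆ U(g). Let m : ℂ → ℂ be a function with m(0) = 0 such that U(α f)(x) = m(α)·(U f)(x) for every nonzero α ∈ ℂ, f ∈ 𝓢(ℝⁿ), and x ∈ ℝⁿ. Then m is a bijection of ℂ onto ℂ and satisfies m(α + β) = m(α) + m(β), m(αβ) = m(α)m(β), and m(conj(α)) = conj(m(α)) for all α, β ∈ ℂ. -/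
open MeasureTheory
open scoped FourierTransform ComplexConjugate

/-- The "star" operation on Schwartz maps: `g*(x) = conj (g (-x))`. -/
noncomputable def starSchwartz {E : Type*} [NormedAddCommGroup E] [NormedSpace ℝ E]
    (g : SchwartzMap E ℂ) : SchwartzMap E ℂ where
  toFun x := conj (g (-x))
  smooth' := Complex.conjLIE.contDiff.comp ((g.smooth ⊤).comp contDiff_neg)
  decay' k n := by
    obtain ⟨C, _, hC⟩ := g.decay k n
    refine ⟨C, fun x => ?_⟩
    have e1 : (fun x : E => (conj (g (-x)) : ℂ)) =
        ⇑Complex.conjLIE ∘ (⇑g ∘ ⇑(LinearIsometryEquiv.neg ℝ : E ≃ₗᵢ[ℝ] E)) := rfl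
    rw [e1, Complex.conjLIE.norm_iteratedFDeriv_comp_left,
      (LinearIsometryEquiv.neg ℝ : E ≃ₗᵢ[ℝ] E).norm_iteratedFDeriv_comp_right]
    simpa using hC (-x)

lemma starSchwartz_apply {E : Type*} [NormedAddCommGroup E] [NormedSpace ℝ E]
    (g : SchwartzMap E ℂ) (x : E) : starSchwartz g x = conj (g (-x)) := rfl

/-- A compactly supported smooth bump, as a Schwartz function. -/
noncomputable def bumpSchwartz (E : Type*) [NormedAddCommGroup E] [InnerProductSpace ℝ E]
    [FiniteDimensional ℝ E] : SchwartzMap E ℂ where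
  toFun x := (((⟨1, 2, one_pos, one_lt_two⟩ : ContDiffBump (0 : E)) : E → ℝ) x : ℂ)
  smooth' := Complex.ofRealCLM.contDiff.comp
    (⟨1, 2, one_pos, one_lt_two⟩ : ContDiffBump (0 : E)).contDiff
  decay' := by
    intro k n
    set φ : ContDiffBump (0 : E) := ⟨1, 2, one_pos, one_lt_two⟩ with hφ
    have hsupp : HasCompactSupport (fun x : E => (φ x : ℂ)) :=
      φ.hasCompactSupport.comp_left (g := fun r : ℝ => (r : ℂ)) (by simp)
    have hcont : Continuous fun x : E => ‖x‖ ^ k *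
        ‖iteratedFDeriv ℝ n (fun x : E => (φ x : ℂ)) x‖ :=
      (continuous_norm.pow k).mul
        ((Complex.ofRealCLM.contDiff.comp φ.contDiff).continuous_iteratedFDeriv
          (by exact_mod_cast le_top)).norm
    have hsupp2 : HasCompactSupport fun x : E => ‖x‖ ^ k *
        ‖iteratedFDeriv ℝ n (fun x : E => (φ x : ℂ)) x‖ :=
      ((hsupp.iteratedFDeriv n).norm).mul_left
    obtain ⟨C, hC⟩ := hcont.bounded_above_of_compact_support hsupp2
    exact ⟨C, fun x => le_trans (Real.le_norm_self _) (hC x)⟩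

lemma bumpSchwartz_zero (E : Type*) [NormedAddCommGroup E] [InnerProductSpace ℝ E]
    [FiniteDimensional ℝ E] : bumpSchwartz E 0 = 1 := by
  show (((⟨1, 2, one_pos, one_lt_two⟩ : ContDiffBump (0 : E)) : E → ℝ) 0 : ℂ) = 1
  rw [Complex.ofReal_eq_one]
  exact ContDiffBump.one_of_mem_closedBall _ (by simp)

theorem stmt12 (n : ℕ)
    (U : SchwartzMap (EuclideanSpace ℝ (Fin n)) ℂ → SchwartzMap (EuclideanSpace ℝ (Fin n)) ℂ)
    (hbij : Function.Bijective U)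
    (h1 : ∀ f g fg : SchwartzMap (EuclideanSpace ℝ (Fin n)) ℂ,
      (∀ x, fg x = f x + conj (g (-x))) →
      ∀ x, U fg x = U f x + conj (U g (-x)))
    (h2 : ∀ f g fg : SchwartzMap (EuclideanSpace ℝ (Fin n)) ℂ,
      (∀ x, fg x = f x * g x) →
      ∀ x, U fg x = U f x * U g x)
    (h3 : ∀ f g fg : SchwartzMap (EuclideanSpace ℝ (Fin n)) ℂ,
      (∀ x, fg x = ∫ y, f (x - y) * g y) →
      ∀ x, U fg x = ∫ y, U f (x - y) * U g y)
    (m : ℂ → ℂ) (hm0 : m 0 = 0)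
    (hm : ∀ α : ℂ, α ≠ 0 → ∀ f : SchwartzMap (EuclideanSpace ℝ (Fin n)) ℂ, ∀ x, U (α • f) x = m α * U f x) :
    Function.Bijective m ∧
    (∀ α β : ℂ, m (α + β) = m α + m β) ∧
    (∀ α β : ℂ, m (α * β) = m α * m β) ∧
    (∀ α : ℂ, m (conj α) = conj (m α)) := by
  -- U sends 0 to 0 (pointwise)
  have hU0 : ∀ x, U 0 x = 0 := by
    intro x
    have h := h1 0 0 0 (fun x => by simp) (-x)
    rw [neg_neg] at h
    have h' : conj (U 0 x) = 0 := (left_eq_add.mp h)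
    rwa [starRingEnd_apply, star_eq_zero] at h'
  -- U commutes with star
  have hUS : ∀ g x, U (starSchwartz g) x = conj (U g (-x)) := by
    intro g x
    have := h1 0 g (starSchwartz g) (fun y => by simp [starSchwartz_apply]) x
    rw [this, hU0, zero_add]
  -- U is additive (pointwise)
  have hUadd : ∀ f h : SchwartzMap (EuclideanSpace ℝ (Fin n)) ℂ, ∀ x,
      U (f + h) x = U f x + U h x := by
    intro f h x
    have e : ∀ y, (f + h) y = f y + conj ((starSchwartz h) (-y)) := by
      intro y
      simp [starSchwartz_apply, neg_neg]
    have := h1 f (starSchwartz h) (f + h) e x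
    rw [this, hUS, neg_neg]
    simp
  -- a point where some U-image is nonzero
  obtain ⟨p, hp⟩ := hbij.2 (bumpSchwartz (EuclideanSpace ℝ (Fin n)))
  set x₀ : EuclideanSpace ℝ (Fin n) := 0 with hx₀
  have hpx : U p x₀ ≠ 0 := by
    rw [hp, hx₀, bumpSchwartz_zero]
    exact one_ne_zero
  -- additivity of m
  have hmadd : ∀ α β : ℂ, m (α + β) = m α + m β := by
    intro α β
    rcases eq_or_ne α 0 with h|hα
    · simp [h, hm0]
    rcases eq_or_ne β 0 with h|hβ
    · simp [h, hm0]
    have key : U (α • p + β • p) x₀ = (m α + m β) * U p x₀ := by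
      rw [hUadd, hm α hα, hm β hβ]; ring
    have e : α • p + β • p = (α + β) • p := (add_smul α β p).symm
    rcases eq_or_ne (α + β) 0 with h0|h0
    · rw [h0, hm0]
      rw [e, h0, zero_smul] at key
      rw [hU0] at key
      exact ((mul_eq_zero.mp key.symm).resolve_right hpx).symm
    · rw [e, hm _ h0] at key
      exact mul_right_cancel₀ hpx key
  -- multiplicativity of m
  have hmmul : ∀ α β : ℂ, m (α * β) = m α * m β := by
    intro α β
    rcases eq_or_ne α 0 with h|hα
    · simp [h, hm0]
    rcases eq_or_ne β 0 with h|hβ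
    · simp [h, hm0]
    have key : U ((α * β) • p) x₀ = m (α * β) * U p x₀ := hm _ (mul_ne_zero hα hβ) p x₀
    have e : (α * β) • p = α • (β • p) := (smul_smul α β p).symm
    rw [e, hm α hα, hm β hβ] at key
    have : (m α * m β) * U p x₀ = m (α * β) * U p x₀ := by rw [← key]; ring
    exact (mul_right_cancel₀ hpx this).symm
  -- m 1 = 1
  have hm1 : m 1 = 1 := by
    have := hm 1 one_ne_zero p x₀
    rw [one_smul] at this
    have : m 1 * U p x₀ = 1 * U p x₀ := by rw [← this, one_mul]
    exact mul_right_cancel₀ hpx this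
  -- conjugation
  have hmconj : ∀ α : ℂ, m (conj α) = conj (m α) := by
    intro α
    rcases eq_or_ne α 0 with h|hα
    · simp [h, hm0]
    have hcα : (conj α : ℂ) ≠ 0 := by
      rw [starRingEnd_apply]; exact star_ne_zero.mpr hα
    have e : starSchwartz (α • p) = conj α • starSchwartz p := by
      ext y
      simp [starSchwartz_apply, SchwartzMap.smul_apply, smul_eq_mul, map_mul]
    have h1' := hUS (α • p) (-x₀)
    rw [e, neg_neg] at h1'
    rw [hm _ hcα, hm α hα, hUS p (-x₀), neg_neg, map_mul] at h1'
    have hc : conj (U p x₀) ≠ 0 := by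
      rw [starRingEnd_apply]; exact star_ne_zero.mpr hpx
    exact mul_right_cancel₀ hc h1'
  -- kernel of m is trivial
  have hker : ∀ α : ℂ, m α = 0 → α = 0 := by
    intro α h
    by_contra hα
    have hUe : U (α • p) = U 0 := SchwartzMap.ext fun x => by
      rw [hm α hα, h, zero_mul, hU0]
    have hsm := hbij.1 hUe
    have hp0 : p = 0 := (smul_eq_zero.mp hsm).resolve_left hα
    exact hpx (by rw [hp0]; exact hU0 x₀)
  -- m fixes the reals
  have himre : ∀ r : ℝ, (m r).im = 0 := by
    intro r
    have := hmconj (r : ℂ)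
    rw [Complex.conj_ofReal] at this
    have := Complex.conj_eq_iff_im.mp this.symm
    exact this
  let Mr : ℝ →+* ℝ :=
    { toFun := fun r => (m r).re
      map_one' := by show (m ((1 : ℝ) : ℂ)).re = 1; norm_num [hm1]
      map_mul' := fun r s => by
        show (m (((r * s : ℝ)) : ℂ)).re = (m r).re * (m s).re
        rw [Complex.ofReal_mul, hmmul, Complex.mul_re, himre, himre]; ring
      map_zero' := by show (m ((0 : ℝ) : ℂ)).re = 0; norm_num [hm0]
      map_add' := fun r s => by
        show (m (((r + s : ℝ)) : ℂ)).re = (m r).re + (m s).re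
        rw [Complex.ofReal_add, hmadd, Complex.add_re] }
  have hMr : ∀ r : ℝ, (m r).re = r := by
    intro r
    exact RingHom.congr_fun (Subsingleton.elim Mr (RingHom.id ℝ)) r
  have hreal : ∀ r : ℝ, m r = r := by
    intro r
    exact Complex.ext (hMr r) (by rw [himre, Complex.ofReal_im])
  -- m I = ± I
  have hI2 : m Complex.I * m Complex.I = Complex.I * Complex.I := by
    rw [← hmmul, Complex.I_mul_I]
    have : ((-1 : ℂ)) = ((-1 : ℝ) : ℂ) := by norm_num
    rw [this, hreal]
  have hI : m Complex.I = Complex.I ∨ m Complex.I = -Complex.I :=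
    mul_self_eq_mul_self_iff.mp hI2
  -- general formula
  have hform : ∀ α : ℂ, m α = α.re + α.im * m Complex.I := by
    intro α
    calc m α = m ((α.re : ℂ) + (α.im : ℂ) * Complex.I) := by rw [Complex.re_add_im]
      _ = m α.re + m α.im * m Complex.I := by rw [hmadd, hmmul]
      _ = α.re + α.im * m Complex.I := by rw [hreal, hreal]
  refine ⟨?_, hmadd, hmmul, hmconj⟩
  rcases hI with h|h
  · have he : m = id := funext fun α => by
      rw [hform, h, Complex.re_add_im]; rfl
    rw [he]
    exact Function.bijective_id
  · have he : m = fun α => conj α := funext fun α => by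
      rw [hform, h]
      apply Complex.ext <;> simp
    rw [he]
    exact Function.Involutive.bijective (fun z => Complex.conj_conj z)
end
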